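/- For distinct propositional atoms p, q, r, the sequent p ⊢ q, r⊃((p⤙q)∧r) is NOT derivable in cut-free LBiI (LBiI without the cut rule); hence cut is not eliminable in LBiI. -/
import Mathlib


/-- BiInt formulas -/
inductive Form : Type
  | atom : ℕ → Form
  | top  : Form
  | bot  : Form
  | and  : Form → Form → Form
  | or   : Form → Form → Form
  | imp  : Form → Form → Form
  | excl : Form → Form → Form
  deriving DecidableEq

/-- Kripke structures for BiInt -/
structure Kripke where
  W : Type
  le : W → W → Prop
  le_refl : ∀ w, le w w
  le_trans : ∀ u v w, le u v → le v w → le u w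
  nonempty : Nonempty W
  I : W → Set ℕ
  mono : ∀ {w w'}, le w w' → I w ⊆ I w'

/-- truth of a formula at a world -/
def Kripke.force (K : Kripke) : K.W → Form → Prop
  | w, .atom p => p ∈ K.I w
  | _, .top => True
  | _, .bot => False
  | w, .and A B => K.force w A ∧ K.force w B
  | w, .or A B => K.force w A ∨ K.force w B
  | w, .imp A B => ∀ w', K.le w w' → K.force w' A → K.force w' B
  | w, .excl A B => ∃ w', K.le w' w ∧ K.force w' A ∧ ¬ K.force w' B

/-- validity of a sequent -/
def SeqValid (Γ Δ : Multiset Form) : Prop :=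
  ∀ (K : Kripke) (w : K.W), (∀ A ∈ Γ, K.force w A) → ∃ A ∈ Δ, K.force w A

/-- The standard-style sequent calculus LBiI; the boolean parameter tells whether
the cut rule is allowed (`LD false` is cut-free LBiI). -/
inductive LD : Bool → Multiset Form → Multiset Form → Prop
  | hyp (b) (A : Form) (Γ Δ) : LD b (A ::ₘ Γ) (A ::ₘ Δ)
  | cut {Γ Δ} (A : Form) : LD true Γ (A ::ₘ Δ) → LD true (A ::ₘ Γ) Δ → LD true Γ Δ
  | weakL {b Γ Δ} (A : Form) : LD b Γ Δ → LD b (A ::ₘ Γ) Δ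
  | weakR {b Γ Δ} (A : Form) : LD b Γ Δ → LD b Γ (A ::ₘ Δ)
  | contrL {b Γ Δ} {A : Form} : LD b (A ::ₘ A ::ₘ Γ) Δ → LD b (A ::ₘ Γ) Δ
  | contrR {b Γ Δ} {A : Form} : LD b Γ (A ::ₘ A ::ₘ Δ) → LD b Γ (A ::ₘ Δ)
  | topL {b Γ Δ} : LD b Γ Δ → LD b (Form.top ::ₘ Γ) Δ
  | topR (b Γ Δ) : LD b Γ (Form.top ::ₘ Δ)
  | botL (b Γ Δ) : LD b (Form.bot ::ₘ Γ) Δ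
  | botR {b Γ Δ} : LD b Γ Δ → LD b Γ (Form.bot ::ₘ Δ)
  | andL {b Γ Δ A B} : LD b (A ::ₘ B ::ₘ Γ) Δ → LD b (Form.and A B ::ₘ Γ) Δ
  | andR {b Γ Δ A B} : LD b Γ (A ::ₘ Δ) → LD b Γ (B ::ₘ Δ) → LD b Γ (Form.and A B ::ₘ Δ)
  | orL {b Γ Δ A B} : LD b (A ::ₘ Γ) Δ → LD b (B ::ₘ Γ) Δ → LD b (Form.or A B ::ₘ Γ) Δ
  | orR {b Γ Δ A B} : LD b Γ (A ::ₘ B ::ₘ Δ) → LD b Γ (Form.or A B ::ₘ Δ)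
  | impL {b Γ Δ A B} : LD b (Form.imp A B ::ₘ Γ) (A ::ₘ Δ) → LD b (B ::ₘ Γ) Δ →
      LD b (Form.imp A B ::ₘ Γ) Δ
  | impR {b Γ Δ A B} : LD b (A ::ₘ Γ) {B} → LD b Γ (Form.imp A B ::ₘ Δ)
  | exclL {b Γ Δ A B} : LD b {A} (B ::ₘ Δ) → LD b (Form.excl A B ::ₘ Γ) Δ
  | exclR {b Γ Δ A B} : LD b Γ (A ::ₘ Δ) → LD b (B ::ₘ Γ) (Form.excl A B ::ₘ Δ) →
      LD b Γ (Form.excl A B ::ₘ Δ)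

/-- members of nested contexts: formulas or nested sequents -/
inductive NForm : Type
  | fm : Form → NForm
  | seq : List NForm → List NForm → NForm

mutual
  /-- deep equality of nested-context members up to permutation
  (nested contexts are multisets) -/
  inductive NEq : NForm → NForm → Prop
    | fm (A : Form) : NEq (.fm A) (.fm A)
    | seq {Γ Γ' Δ Δ'} : CEq Γ Γ' → CEq Δ Δ' → NEq (.seq Γ Δ) (.seq Γ' Δ')
  /-- equality of nested contexts as multisets -/
  inductive CEq : List NForm → List NForm → Prop
    | nil : CEq [] []
    | cons {a b Γ Γ'} : NEq a b → CEq Γ Γ' → CEq (a :: Γ) (b :: Γ')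
    | swap (a b : NForm) (Γ : List NForm) : CEq (a :: b :: Γ) (b :: a :: Γ)
    | trans {Γ Γ' Γ''} : CEq Γ Γ' → CEq Γ' Γ'' → CEq Γ Γ''
end

/-- The nested sequent calculus N-LBiI; the boolean parameter tells whether
the cut rule is allowed. Nested contexts are lists identified up to `CEq`
(i.e. multisets), so there is an explicit exchange rule. -/
inductive ND : Bool → List NForm → List NForm → Prop
  | exch {b Γ Γ' Δ Δ'} : CEq Γ Γ' → CEq Δ Δ' → ND b Γ Δ → ND b Γ' Δ'
  | hyp (b) (A : Form) (Γ Δ) : ND b (.fm A :: Γ) (.fm A :: Δ)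
  | cut {Γ Δ} (A : Form) : ND true Γ (.fm A :: Δ) → ND true (.fm A :: Γ) Δ → ND true Γ Δ
  | weakL {b Γ Δ} (A : Form) : ND b Γ Δ → ND b (.fm A :: Γ) Δ
  | weakR {b Γ Δ} (A : Form) : ND b Γ Δ → ND b Γ (.fm A :: Δ)
  | contrL {b Γ Δ} {A : Form} : ND b (.fm A :: .fm A :: Γ) Δ → ND b (.fm A :: Γ) Δ
  | contrR {b Γ Δ} {A : Form} : ND b Γ (.fm A :: .fm A :: Δ) → ND b Γ (.fm A :: Δ)
  | topL {b Γ Δ} : ND b Γ Δ → ND b (.fm .top :: Γ) Δ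
  | topR (b Γ Δ) : ND b Γ (.fm .top :: Δ)
  | botL (b Γ Δ) : ND b (.fm .bot :: Γ) Δ
  | botR {b Γ Δ} : ND b Γ Δ → ND b Γ (.fm .bot :: Δ)
  | andL {b Γ Δ A B} : ND b (.fm A :: .fm B :: Γ) Δ → ND b (.fm (.and A B) :: Γ) Δ
  | andR {b Γ Δ A B} : ND b Γ (.fm A :: Δ) → ND b Γ (.fm B :: Δ) → ND b Γ (.fm (.and A B) :: Δ)
  | orL {b Γ Δ A B} : ND b (.fm A :: Γ) Δ → ND b (.fm B :: Γ) Δ → ND b (.fm (.or A B) :: Γ) Δ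
  | orR {b Γ Δ A B} : ND b Γ (.fm A :: .fm B :: Δ) → ND b Γ (.fm (.or A B) :: Δ)
  | impL {b Γ Δ A B} : ND b (.fm (.imp A B) :: Γ) (.fm A :: Δ) → ND b (.fm B :: Γ) Δ →
      ND b (.fm (.imp A B) :: Γ) Δ
  | impR {b Γ Δ A B} : ND b (.fm A :: Γ) [.fm B] → ND b Γ (.fm (.imp A B) :: Δ)
  | exclL {b Γ Δ A B} : ND b [.fm A] (.fm B :: Δ) → ND b (.fm (.excl A B) :: Γ) Δ
  | exclR {b Γ Δ A B} : ND b Γ (.fm A :: Δ) → ND b (.fm B :: Γ) (.fm (.excl A B) :: Δ) →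
      ND b Γ (.fm (.excl A B) :: Δ)
  | nestL {b Γ Δ Γ₀ Δ₀} : ND b Γ₀ (Δ₀ ++ Δ) → ND b (.seq Γ₀ Δ₀ :: Γ) Δ
  | nestR {b Γ Δ Γ₀ Δ₀} : ND b (Γ ++ Γ₀) Δ₀ → ND b Γ (.seq Γ₀ Δ₀ :: Δ)
  | unnestL {b Γ Δ Γ₀ Δ₀} : ND b (.seq Γ₀ Δ₀ :: Γ) Δ → ND b (Γ₀ ++ Γ) (Δ₀ ++ Δ)
  | unnestR {b Γ Δ Γ₀ Δ₀} : ND b Γ (.seq Γ₀ Δ₀ :: Δ) → ND b (Γ₀ ++ Γ) (Δ₀ ++ Δ)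



def CC (p q : ℕ) : Form := .excl (.atom p) (.atom q)
def DD (p q r : ℕ) : Form := .and (CC p q) (.atom r)
def FF (p q r : ℕ) : Form := .imp (.atom r) (DD p q r)

/-- Invariant: a family of sequents, closed under backward proof search in
cut-free LBiI, containing the counterexample sequent, and containing no axioms. -/
def SS (p q r : ℕ) (Γ Δ : Multiset Form) : Prop :=
  ((∀ A ∈ Γ, A = Form.atom p ∨ A = Form.atom r) ∧
   (∀ B ∈ Δ, B = Form.atom q ∨ B = FF p q r)) ∨
  ((∀ A ∈ Γ, A = Form.atom p ∨ A = Form.atom q ∨ A = Form.atom r) ∧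
   (∀ B ∈ Δ, B = CC p q ∨ B = DD p q r))

theorem SS_nd (p q r : ℕ) (hpq : p ≠ q) (hqr : q ≠ r) :
    ∀ {b : Bool} {Γ Δ : Multiset Form}, LD b Γ Δ → b = false → ¬ SS p q r Γ Δ := by
  intro b Γ Δ h
  induction h with
  | hyp b A Γ Δ =>
      intro _ hS
      rcases hS with ⟨hL, hR⟩ | ⟨hL, hR⟩
      · have h1 := hL A (Multiset.mem_cons_self A Γ)
        have h2 := hR A (Multiset.mem_cons_self A Δ)
        rcases h1 with rfl | rfl <;>
          simp [FF, DD, CC, hpq, Ne.symm hqr] at h2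
      · have h1 := hL A (Multiset.mem_cons_self A Γ)
        have h2 := hR A (Multiset.mem_cons_self A Δ)
        rcases h1 with rfl | rfl | rfl <;>
          simp [FF, DD, CC] at h2
  | cut A h1 h2 ih1 ih2 => intro hb; exact absurd hb (by simp)
  | weakL A h ih =>
      intro hb hS
      refine ih hb ?_
      rcases hS with ⟨hL, hR⟩ | ⟨hL, hR⟩
      · exact Or.inl ⟨fun x hx => hL x (Multiset.mem_cons_of_mem hx), hR⟩
      · exact Or.inr ⟨fun x hx => hL x (Multiset.mem_cons_of_mem hx), hR⟩
  | weakR A h ih =>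
      intro hb hS
      refine ih hb ?_
      rcases hS with ⟨hL, hR⟩ | ⟨hL, hR⟩
      · exact Or.inl ⟨hL, fun x hx => hR x (Multiset.mem_cons_of_mem hx)⟩
      · exact Or.inr ⟨hL, fun x hx => hR x (Multiset.mem_cons_of_mem hx)⟩
  | contrL h ih =>
      intro hb hS
      refine ih hb ?_
      rcases hS with ⟨hL, hR⟩ | ⟨hL, hR⟩
      · refine Or.inl ⟨fun x hx => ?_, hR⟩
        rcases Multiset.mem_cons.mp hx with rfl | hx
        · exact hL x (Multiset.mem_cons_self x _)
        · exact hL x hx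
      · refine Or.inr ⟨fun x hx => ?_, hR⟩
        rcases Multiset.mem_cons.mp hx with rfl | hx
        · exact hL x (Multiset.mem_cons_self x _)
        · exact hL x hx
  | contrR h ih =>
      intro hb hS
      refine ih hb ?_
      rcases hS with ⟨hL, hR⟩ | ⟨hL, hR⟩
      · refine Or.inl ⟨hL, fun x hx => ?_⟩
        rcases Multiset.mem_cons.mp hx with rfl | hx
        · exact hR x (Multiset.mem_cons_self x _)
        · exact hR x hx
      · refine Or.inr ⟨hL, fun x hx => ?_⟩
        rcases Multiset.mem_cons.mp hx with rfl | hx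
        · exact hR x (Multiset.mem_cons_self x _)
        · exact hR x hx
  | topL h ih =>
      intro _ hS
      rcases hS with ⟨hL, _⟩ | ⟨hL, _⟩ <;>
      · have := hL _ (Multiset.mem_cons_self Form.top _)
        simp_all
  | topR b Γ Δ =>
      intro _ hS
      rcases hS with ⟨_, hR⟩ | ⟨_, hR⟩ <;>
      · have := hR _ (Multiset.mem_cons_self Form.top _)
        simp_all [CC, DD, FF]
  | botL b Γ Δ =>
      intro _ hS
      rcases hS with ⟨hL, _⟩ | ⟨hL, _⟩ <;>
      · have := hL _ (Multiset.mem_cons_self Form.bot _)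
        simp_all
  | botR h ih =>
      intro _ hS
      rcases hS with ⟨_, hR⟩ | ⟨_, hR⟩ <;>
      · have := hR _ (Multiset.mem_cons_self Form.bot _)
        simp_all [CC, DD, FF]
  | andL h ih =>
      intro _ hS
      rcases hS with ⟨hL, _⟩ | ⟨hL, _⟩ <;>
      · have := hL _ (Multiset.mem_cons_self (Form.and _ _) _)
        simp_all
  | andR h1 h2 ih1 ih2 =>
      intro hb hS
      rcases hS with ⟨_, hR⟩ | ⟨hL, hR⟩
      · have := hR _ (Multiset.mem_cons_self (Form.and _ _) _)
        simp_all [CC, DD, FF]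
      · have hAB := hR _ (Multiset.mem_cons_self (Form.and _ _) _)
        simp only [CC, DD, FF] at hAB
        rcases hAB with hAB | hAB
        · simp_all
        · injection hAB with e1 e2
          subst e1; subst e2
          refine ih1 hb (Or.inr ⟨hL, fun x hx => ?_⟩)
          rcases Multiset.mem_cons.mp hx with rfl | hx
          · exact Or.inl rfl
          · exact hR x (Multiset.mem_cons_of_mem hx)
  | orL h1 h2 ih1 ih2 =>
      intro _ hS
      rcases hS with ⟨hL, _⟩ | ⟨hL, _⟩ <;>
      · have := hL _ (Multiset.mem_cons_self (Form.or _ _) _)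
        simp_all
  | orR h ih =>
      intro _ hS
      rcases hS with ⟨_, hR⟩ | ⟨_, hR⟩ <;>
      · have := hR _ (Multiset.mem_cons_self (Form.or _ _) _)
        simp_all [CC, DD, FF]
  | impL h1 h2 ih1 ih2 =>
      intro _ hS
      rcases hS with ⟨hL, _⟩ | ⟨hL, _⟩ <;>
      · have := hL _ (Multiset.mem_cons_self (Form.imp _ _) _)
        simp_all
  | impR h ih =>
      intro hb hS
      rcases hS with ⟨hL, hR⟩ | ⟨_, hR⟩
      · have hAB := hR _ (Multiset.mem_cons_self (Form.imp _ _) _)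
        simp only [CC, DD, FF] at hAB
        rcases hAB with hAB | hAB
        · simp_all
        · injection hAB with e1 e2
          subst e1; subst e2
          refine ih hb (Or.inr ⟨fun x hx => ?_, fun x hx => ?_⟩)
          · rcases Multiset.mem_cons.mp hx with rfl | hx
            · exact Or.inr (Or.inr rfl)
            · rcases hL x hx with rfl | rfl
              · exact Or.inl rfl
              · exact Or.inr (Or.inr rfl)
          · rw [Multiset.mem_singleton] at hx
            subst hx
            exact Or.inr rfl
      · have := hR _ (Multiset.mem_cons_self (Form.imp _ _) _)
        simp_all [CC, DD, FF]
  | exclL h ih =>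
      intro _ hS
      rcases hS with ⟨hL, _⟩ | ⟨hL, _⟩ <;>
      · have := hL _ (Multiset.mem_cons_self (Form.excl _ _) _)
        simp_all
  | exclR h1 h2 ih1 ih2 =>
      intro hb hS
      rcases hS with ⟨_, hR⟩ | ⟨hL, hR⟩
      · have := hR _ (Multiset.mem_cons_self (Form.excl _ _) _)
        simp_all [CC, DD, FF]
      · have hAB := hR _ (Multiset.mem_cons_self (Form.excl _ _) _)
        simp only [CC, DD, FF] at hAB
        rcases hAB with hAB | hAB
        · injection hAB with e1 e2
          subst e1; subst e2
          refine ih2 hb (Or.inr ⟨fun x hx => ?_, hR⟩)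
          rcases Multiset.mem_cons.mp hx with rfl | hx
          · exact Or.inr (Or.inl rfl)
          · exact hL x hx
        · simp_all


/-- the sequent p ⊢ q, r⊃((p⤙q)∧r) is not derivable in cut-free LBiI -/
theorem example_sequent_not_cutfree_derivable (p q r : ℕ)
    (hpq : p ≠ q) (hpr : p ≠ r) (hqr : q ≠ r) :
    ¬ LD false {Form.atom p}
        {Form.atom q, Form.imp (Form.atom r) (Form.and (Form.excl (Form.atom p) (Form.atom q)) (Form.atom r))} := by
  intro h
  refine SS_nd p q r hpq hqr h rfl ?_
  refine Or.inl ⟨fun x hx => ?_, fun x hx => ?_⟩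
  · rw [Multiset.mem_singleton] at hx; exact Or.inl hx
  · have : x = Form.atom q ∨ x = Form.imp (Form.atom r) (Form.and (Form.excl (Form.atom p) (Form.atom q)) (Form.atom r)) := by
      simpa using hx
    simpa [FF, DD, CC] using this
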